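/- arXiv:2303.17714 — 4 statements merged into one kernel-verified Lean document; each statement's English description precedes it below -/
import Mathlib

section
/- Let p be a probability distribution on n-qubit Paulis such that p(R) = 0 for all R of weight ≥ 4, and suppose every weight-3 marginal is small: μ(R_B) < ε for all Paulis R_B with w(R_B) = |B| = 3. Then for distinct qubits i ≠ j and P, Q ∈ {X,Y,Z}: μ(P_iQ_j) − 3(n−2)ε < p(P_iQ_j) ≤ μ(P_iQ_j). -/
open Matrix Finset

/-- n-qubit Paulis (mod phase), identified with `(Z₂)^{2n}` via `P = Xᵃ Zᵇ`. -/
abbrev Pauli (n : ℕ) := (Fin n → ZMod 2) × (Fin n → ZMod 2)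

/-- The standard symplectic form on `(Z₂)^{2n}`. -/
def symp {n : ℕ} (Q P : Pauli n) : ZMod 2 :=
  ∑ i, (Q.1 i * P.2 i + Q.2 i * P.1 i)

/-- The commutation character: `χ_Q(P) = 1` if `Q` and `P` commute, `-1` otherwise. -/
def chi {n : ℕ} (Q P : Pauli n) : ℤ := (-1) ^ (symp Q P).val

/-- The Pauli operator `Xᵃ Zᵇ` as a `2ⁿ × 2ⁿ` matrix (indexed by bit strings). -/
def PauliOp {n : ℕ} (P : Pauli n) :
    Matrix (Fin n → ZMod 2) (Fin n → ZMod 2) ℂ :=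
  fun s t => if s = t + P.1 then (-1 : ℂ) ^ (∑ i, P.2 i * t i).val else 0

/-- `P` acts as the identity outside the qubit set `A`. -/
def supportedIn {n : ℕ} (A : Finset (Fin n)) (P : Pauli n) : Prop :=
  ∀ i ∉ A, P.1 i = 0 ∧ P.2 i = 0

instance {n : ℕ} (A : Finset (Fin n)) : DecidablePred (supportedIn A) := fun _ => by
  unfold supportedIn; infer_instance

/-- The marginal distribution: `μ(P_A) = Σ_{Q supported in Aᶜ} p(P_A · Q)`. -/
noncomputable def marginal {n : ℕ} (p : Pauli n → ℝ) (A : Finset (Fin n))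
    (P : Pauli n) : ℝ :=
  ∑ Q ∈ Finset.univ.filter (fun Q => supportedIn Aᶜ Q), p (P + Q)

/-- The weight of a Pauli: the number of qubits on which it acts nontrivially. -/
def weight {n : ℕ} (P : Pauli n) : ℕ :=
  (Finset.univ.filter (fun i => P.1 i ≠ 0 ∨ P.2 i ≠ 0)).card

/-- The single-qubit Pauli `v ∈ {I,X,Y,Z} ≃ Z₂ × Z₂` placed at qubit `i`. -/
def single {n : ℕ} (i : Fin n) (v : ZMod 2 × ZMod 2) : Pauli n :=
  (Pi.single i v.1, Pi.single i v.2)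

/-- The support of a Pauli as a set of qubits. -/
def psupp {n : ℕ} (P : Pauli n) : Finset (Fin n) :=
  Finset.univ.filter (fun i => P.1 i ≠ 0 ∨ P.2 i ≠ 0)


/-! Since `p` vanishes from weight 4 on, the only Paulis `Q` outside `{i, j}` contributing to the
marginal `μ(P_iQ_j) = Σ_Q p(P_iQ_j · Q)` are `Q = I` and the `3(n − 2)` single-qubit Paulis `Q = R_k`
with `k ∉ {i, j}`. Each `p(P_iQ_jR_k)` is bounded by the weight-3 marginal `μ(P_iQ_jR_k) < ε`. -/

section

variable {n : ℕ}

lemma mem_psupp {P : Pauli n} {k : Fin n} : k ∈ psupp P ↔ P.1 k ≠ 0 ∨ P.2 k ≠ 0 := by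
  simp [psupp]

lemma notMem_psupp {P : Pauli n} {k : Fin n} : k ∉ psupp P ↔ P.1 k = 0 ∧ P.2 k = 0 := by
  simp [psupp]

lemma weight_eq_card_psupp (P : Pauli n) : weight P = #(psupp P) := rfl

lemma supportedIn_iff_psupp_subset {A : Finset (Fin n)} {P : Pauli n} :
    supportedIn A P ↔ psupp P ⊆ A := by
  simp only [supportedIn, subset_iff, ← notMem_psupp]
  exact forall_congr' fun k => not_imp_not

lemma psupp_nonempty {P : Pauli n} (hP : P ≠ 0) : (psupp P).Nonempty := by
  contrapose! hP
  ext k <;> simp [notMem_psupp.mp (hP ▸ notMem_empty k)]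

lemma psupp_add_of_disjoint {P Q : Pauli n} (h : Disjoint (psupp P) (psupp Q)) :
    psupp (P + Q) = psupp P ∪ psupp Q := by
  ext k
  by_cases hP : k ∈ psupp P
  · obtain ⟨hQ1, hQ2⟩ := notMem_psupp.mp (disjoint_left.mp h hP)
    simp only [mem_union, hP, true_or, iff_true]
    simpa [mem_psupp, hQ1, hQ2] using hP
  · obtain ⟨hP1, hP2⟩ := notMem_psupp.mp hP
    simp [mem_psupp, hP1, hP2]

lemma weight_add_of_disjoint {P Q : Pauli n} (h : Disjoint (psupp P) (psupp Q)) :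
    weight (P + Q) = weight P + weight Q := by
  simp only [weight_eq_card_psupp, psupp_add_of_disjoint h, card_union_of_disjoint h]

lemma psupp_single (k : Fin n) {u : ZMod 2 × ZMod 2} (hu : u ≠ 0) : psupp (single k u) = {k} := by
  ext m
  rcases eq_or_ne m k with rfl | hm
  · simpa [mem_psupp, _root_.single, Prod.ext_iff, or_iff_not_imp_left] using hu
  · simp [mem_psupp, _root_.single, hm]

lemma weight_single (k : Fin n) {u : ZMod 2 × ZMod 2} (hu : u ≠ 0) : weight (single k u) = 1 := by
  rw [weight_eq_card_psupp, psupp_single k hu, card_singleton]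

lemma eq_single_of_psupp_subset {P : Pauli n} {k : Fin n} (h : psupp P ⊆ {k}) :
    P = single k (P.1 k, P.2 k) := by
  have hzero : ∀ m ≠ k, P.1 m = 0 ∧ P.2 m = 0 := fun m hm =>
    notMem_psupp.mp fun hmP => hm (mem_singleton.mp (h hmP))
  ext m <;> rcases eq_or_ne m k with rfl | hm <;> simp [_root_.single, *]

lemma exists_single_eq_of_weight_le_one {P : Pauli n} (hP : weight P ≤ 1) (hP0 : P ≠ 0) :
    ∃ k ∈ psupp P, ∃ u ≠ 0, single k u = P := by
  obtain ⟨k, hk⟩ := psupp_nonempty hP0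
  have hsub : psupp P ⊆ {k} := fun m hm => mem_singleton.mpr (card_le_one.mp hP m hm k hk)
  refine ⟨k, hk, (P.1 k, P.2 k), ?_, (eq_single_of_psupp_subset hsub).symm⟩
  simpa [Prod.ext_iff, mem_psupp, or_iff_not_imp_left] using hk

lemma p_le_marginal {p : Pauli n → ℝ} (hp0 : ∀ R, 0 ≤ p R) (A : Finset (Fin n)) (P : Pauli n) :
    p P ≤ marginal p A P := by
  have h0 : (0 : Pauli n) ∈ univ.filter (supportedIn Aᶜ) := by simp [supportedIn]
  simpa [marginal] using single_le_sum (f := fun Q => p (P + Q)) (fun Q _ => hp0 _) h0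

lemma marginal_le_add_sum_single {p : Pauli n → ℝ} (hp0 : ∀ R, 0 ≤ p R) {S : Pauli n}
    (hp : ∀ R, weight S + 2 ≤ weight R → p R = 0) :
    marginal p (psupp S) S ≤
      p S + ∑ x ∈ (psupp S)ᶜ ×ˢ ({u | u ≠ 0} : Finset (ZMod 2 × ZMod 2)),
        p (S + _root_.single x.1 x.2) := by
  set F := univ.filter (supportedIn (psupp S)ᶜ)
  set singles := ((psupp S)ᶜ ×ˢ ({u | u ≠ 0} : Finset (ZMod 2 × ZMod 2))).image
    fun x => _root_.single x.1 x.2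
  have hF0 : (0 : Pauli n) ∈ F := by simp [F, supportedIn]
  have hsupport : ∀ Q ∈ F.erase 0, p (S + Q) ≠ 0 → Q ∈ singles := by
    intro Q hQ hpQ
    obtain ⟨hQ0, hQF⟩ := mem_erase.mp hQ
    have hdisj : Disjoint (psupp S) (psupp Q) := by
      simpa [F, supportedIn_iff_psupp_subset, subset_compl_iff_disjoint_left] using hQF
    have hwQ : weight Q ≤ 1 := by
      have := mt (hp (S + Q)) hpQ
      rw [weight_add_of_disjoint hdisj] at this
      omega
    obtain ⟨k, hk, u, hu, rfl⟩ := exists_single_eq_of_weight_le_one hwQ hQ0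
    exact mem_image.mpr ⟨(k, u), by simpa [hu] using disjoint_right.mp hdisj hk, rfl⟩
  calc marginal p (psupp S) S = p S + ∑ Q ∈ F.erase 0, p (S + Q) := by
        rw [marginal, ← add_sum_erase F _ hF0, add_zero]
    _ ≤ p S + ∑ Q ∈ singles, p (S + Q) := by
        refine add_le_add_right ?_ _
        rw [← sum_filter_of_ne hsupport]
        exact sum_le_sum_of_subset_of_nonneg (fun Q hQ => (mem_filter.mp hQ).2)
          fun Q _ _ => hp0 _
    _ ≤ _ := add_le_add_right (sum_image_le_of_nonneg fun Q _ => hp0 _) _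

end

theorem weight_three_marginal_bound_general {n : ℕ} (p : Pauli n → ℝ) (ε : ℝ)
    (hp0 : ∀ R, 0 ≤ p R)
    (h4 : ∀ R : Pauli n, 4 ≤ weight R → p R = 0)
    (h3 : ∀ R : Pauli n, weight R = 3 → marginal p (psupp R) R < ε)
    (hn : 3 ≤ n) (i j : Fin n) (hij : i ≠ j)
    (v w : ZMod 2 × ZMod 2) (hv : v ≠ 0) (hw : w ≠ 0) :
    marginal p {i, j} (single i v + single j w) - 3 * ((n : ℝ) - 2) * ε
        < p (single i v + single j w) ∧
    p (single i v + single j w) ≤ marginal p {i, j} (single i v + single j w) := by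
  set S := single i v + single j w
  have hS : psupp S = {i, j} := by
    rw [psupp_add_of_disjoint] <;> simp [psupp_single, hv, hw, hij, pair_comm]
  have hwS : weight S = 2 := by rw [weight_eq_card_psupp, hS, card_pair hij]
  set K := (psupp S)ᶜ ×ˢ ({u | u ≠ 0} : Finset (ZMod 2 × ZMod 2))
  have hK : #K = 3 * (n - 2) := by
    rw [card_product, card_compl, hS, card_pair hij, Fintype.card_fin, mul_comm]
    rfl
  have hterm : ∀ x ∈ K, p (S + _root_.single x.1 x.2) < ε := by
    rintro ⟨k, u⟩ hx
    obtain ⟨hk, hu⟩ : k ∉ psupp S ∧ u ≠ 0 := by simpa [K] using hx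
    have hw3 : weight (S + _root_.single k u) = 3 := by
      rw [weight_add_of_disjoint (by simpa [psupp_single k hu] using hk), hwS, weight_single k hu]
    exact (p_le_marginal hp0 _ _).trans_lt (h3 _ hw3)
  have hsum : ∑ x ∈ K, p (S + _root_.single x.1 x.2) < 3 * ((n : ℝ) - 2) * ε := by
    have hK0 : K.Nonempty := card_pos.mp (by omega)
    calc _ < ∑ _x ∈ K, ε := sum_lt_sum_of_nonempty hK0 hterm
      _ = 3 * ((n : ℝ) - 2) * ε := by
        rw [sum_const, hK, nsmul_eq_mul]
        push_cast [Nat.cast_sub (by omega : 2 ≤ n)]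
        ring
  have hmarg := marginal_le_add_sum_single hp0 (S := S) (by rw [hwS]; exact h4)
  rw [← hS]
  exact ⟨by linarith, p_le_marginal hp0 _ _⟩

/-- if `p` vanishes on weight ≥ 4 and every weight-3 marginal is
below `ε`, then for distinct `i ≠ j` and `P, Q ∈ {X,Y,Z}`:
`μ(P_iQ_j) − 3(n−2)ε < p(P_iQ_j) ≤ μ(P_iQ_j)`. -/
theorem weight_three_marginal_bound {n : ℕ} (p : Pauli n → ℝ) (ε : ℝ)
    (hp0 : ∀ R, 0 ≤ p R) (hp1 : ∑ R, p R = 1)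
    (h4 : ∀ R : Pauli n, 4 ≤ weight R → p R = 0)
    (h3 : ∀ R : Pauli n, weight R = 3 → marginal p (psupp R) R < ε)
    (hn : 3 ≤ n) (i j : Fin n) (hij : i ≠ j)
    (v w : ZMod 2 × ZMod 2) (hv : v ≠ 0) (hw : w ≠ 0) :
    marginal p {i, j} (single i v + single j w) - 3 * ((n : ℝ) - 2) * ε
        < p (single i v + single j w) ∧
    p (single i v + single j w) ≤ marginal p {i, j} (single i v + single j w) :=
  weight_three_marginal_bound_general p ε hp0 h4 h3 hn i j hij v w hv hw
end

section
/- Let H be an invertible map on the Pauli set generated by conjugation by a unitary H, with H·P_A ⊆ P_A for the set P_A of Paulis supported in A, and let c be the smallest positive integer with H^c acting trivially (as conjugation by a Pauli). Then the orbit marginal μ(O(P_A)) := Σ_{Q ∈ O(P_A)} μ(Q), where O(P_A) = {H^j P_A H^{-j} : j ∈ ℕ}, satisfies μ(O(P_A)) = (|O(P_A)|/4^{|A|}) · Σ_{Q_A ∈ P_A} χ_{Q_A}(P_A) · f(O(Q_A)), where f(O(Q_A)) = |O(Q_A)|^{-1} Σ_{R ∈ O(Q_A)} f(R) is the arithmetic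 orbital fidelity average. -/
open Matrix Finset

/-- The marginal probability expressed through the Pauli fidelities `f`
(cf. Eq. (fid2marginal)): `μ(P_A) = 4^{-|A|} Σ_{Q_A} χ_{Q_A}(P_A) f(Q_A)`. -/
noncomputable def muF {n : ℕ} (f : Pauli n → ℝ) (A : Finset (Fin n))
    (P : Pauli n) : ℝ :=
  ((4 : ℝ) ^ A.card)⁻¹ *
    ∑ Q ∈ Finset.univ.filter (fun Q => supportedIn A Q), (chi Q P : ℝ) * f Q

/-- The `H`-orbit `{H^j P H^{-j} : j ∈ ℕ}` of a Pauli `P` under the (symplectic)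
action `h` of conjugation by `H`, with `h^c = id`. -/
def orb {n : ℕ} (h : Equiv.Perm (Pauli n)) (c : ℕ) (P : Pauli n) : Finset (Pauli n) :=
  (Finset.range c).image (fun j => (⇑h)^[j] P)

section mufiAux
variable {n : ℕ} (h : Equiv.Perm (Pauli n)) {c : ℕ}

lemma mufi_per (hcid : (⇑h)^[c] = id) (x : Pauli n) : Function.IsPeriodicPt ⇑h c x :=
  congrFun hcid x

lemma mufi_orb_eq (hc : 0 < c) (hcid : (⇑h)^[c] = id) (x : Pauli n) :
    orb h c x = (Finset.range (Function.minimalPeriod ⇑h x)).image (fun j => (⇑h)^[j] x) := by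
  have hd : Function.minimalPeriod ⇑h x ∣ c := (mufi_per h hcid x).minimalPeriod_dvd
  have hdpos : 0 < Function.minimalPeriod ⇑h x := (mufi_per h hcid x).minimalPeriod_pos hc
  apply Finset.Subset.antisymm
  · intro R hR
    rw [orb, Finset.mem_image] at hR
    obtain ⟨j, _, rfl⟩ := hR
    rw [Finset.mem_image]
    exact ⟨j % Function.minimalPeriod ⇑h x, Finset.mem_range.mpr (Nat.mod_lt _ hdpos),
      Function.iterate_mod_minimalPeriod_eq⟩
  · intro R hR
    rw [Finset.mem_image] at hR
    obtain ⟨j, hj, rfl⟩ := hR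
    rw [orb, Finset.mem_image]
    exact ⟨j, Finset.mem_range.mpr (lt_of_lt_of_le (Finset.mem_range.mp hj)
      (Nat.le_of_dvd hc hd)), rfl⟩

lemma mufi_fiber_card (hc : 0 < c) (hcid : (⇑h)^[c] = id) (x : Pauli n) {j0 : ℕ}
    (hj0 : j0 < Function.minimalPeriod ⇑h x) :
    ((Finset.range c).filter (fun j => (⇑h)^[j] x = (⇑h)^[j0] x)).card
      = c / Function.minimalPeriod ⇑h x := by
  set d := Function.minimalPeriod ⇑h x with hd
  have hdvd : d ∣ c := (mufi_per h hcid x).minimalPeriod_dvd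
  have hdpos : 0 < d := (mufi_per h hcid x).minimalPeriod_pos hc
  have key : (Finset.range c).filter (fun j => (⇑h)^[j] x = (⇑h)^[j0] x)
      = (Finset.range (c / d)).image (fun q => j0 + d * q) := by
    ext j
    simp only [Finset.mem_filter, Finset.mem_range, Finset.mem_image]
    constructor
    · rintro ⟨hjc, hj⟩
      have h1 : (⇑h)^[j % d] x = (⇑h)^[j0] x := by
        rw [Function.iterate_mod_minimalPeriod_eq]; exact hj
      have h2 : j % d = j0 :=
        Function.iterate_injOn_Iio_minimalPeriod (Set.mem_Iio.mpr (Nat.mod_lt _ hdpos))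
          (Set.mem_Iio.mpr hj0) h1
      refine ⟨j / d, Nat.div_lt_div_of_lt_of_dvd hdvd hjc, ?_⟩
      rw [← h2]
      exact Nat.mod_add_div j d
    · rintro ⟨q, hq, rfl⟩
      have hjd : (j0 + d * q) % d = j0 := by
        rw [Nat.add_mul_mod_self_left, Nat.mod_eq_of_lt hj0]
      constructor
      · calc j0 + d * q < d + d * q := by omega
          _ = d * (q + 1) := by ring
          _ ≤ d * (c / d) := Nat.mul_le_mul_left _ hq
          _ = c := Nat.mul_div_cancel' hdvd
      · rw [← Function.iterate_mod_minimalPeriod_eq, ← hd, hjd]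
  rw [key, Finset.card_image_of_injective _
    (fun a b hab => mul_left_cancel₀ hdpos.ne' (Nat.add_left_cancel hab)), Finset.card_range]

lemma mufi_sum_range_iterate (hc : 0 < c) (hcid : (⇑h)^[c] = id) (x : Pauli n)
    (g : Pauli n → ℝ) :
    ∑ j ∈ Finset.range c, g ((⇑h)^[j] x)
      = (c / Function.minimalPeriod ⇑h x) • ∑ R ∈ orb h c x, g R := by
  rw [Finset.sum_comp g (fun j => (⇑h)^[j] x)]
  rw [show (Finset.range c).image (fun j => (⇑h)^[j] x) = orb h c x from rfl]
  rw [Finset.smul_sum]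
  apply Finset.sum_congr rfl
  intro R hR
  rw [mufi_orb_eq h hc hcid x, Finset.mem_image] at hR
  obtain ⟨j0, hj0, rfl⟩ := hR
  rw [mufi_fiber_card h hc hcid x (Finset.mem_range.mp hj0)]

lemma mufi_orb_card (hc : 0 < c) (hcid : (⇑h)^[c] = id) (x : Pauli n) :
    (orb h c x).card = Function.minimalPeriod ⇑h x := by
  rw [mufi_orb_eq h hc hcid x, Finset.card_image_of_injOn, Finset.card_range]
  intro a ha b hb hab
  exact Function.iterate_injOn_Iio_minimalPeriod (by simpa using ha) (by simpa using hb) hab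

lemma mufi_avg (hc : 0 < c) (hcid : (⇑h)^[c] = id) (x : Pauli n) (g : Pauli n → ℝ) :
    ((orb h c x).card : ℝ)⁻¹ * ∑ R ∈ orb h c x, g R
      = (c : ℝ)⁻¹ * ∑ j ∈ Finset.range c, g ((⇑h)^[j] x) := by
  set d := Function.minimalPeriod ⇑h x with hd
  have hdvd : d ∣ c := (mufi_per h hcid x).minimalPeriod_dvd
  have hdpos : 0 < d := (mufi_per h hcid x).minimalPeriod_pos hc
  have hm : d * (c / d) = c := Nat.mul_div_cancel' hdvd
  have hmpos : 0 < c / d := Nat.div_pos (Nat.le_of_dvd hc hdvd) hdpos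
  rw [mufi_sum_range_iterate h hc hcid x g, mufi_orb_card h hc hcid x, nsmul_eq_mul, ← hd]
  have hc' : (c : ℝ) = (d : ℝ) * ((c / d : ℕ) : ℝ) := by
    rw [← Nat.cast_mul, hm]
  rw [hc', mul_inv]
  field_simp

end mufiAux

/-- Lemma `mufi`: if `h` (conjugation by a Clifford `H`) preserves
the set of Paulis supported in `A` and the commutation character, and `c` is the
least positive integer with `h^c = id` (i.e. `H^c` is conjugation by a Pauli),
then the orbit marginal equals
`μ(O(P_A)) = (|O(P_A)|/4^{|A|}) Σ_{Q_A} χ_{Q_A}(P_A) f(O(Q_A))`,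
where `f(O(Q_A))` is the arithmetic orbital average of the fidelities. -/


theorem orbit_marginal_from_orbital_fidelities {n : ℕ}
    (h : Equiv.Perm (Pauli n)) (c : ℕ) (hc : 0 < c)
    (hcid : (⇑h)^[c] = id) (hmin : ∀ k, 0 < k → k < c → (⇑h)^[k] ≠ id)
    (A : Finset (Fin n))
    (hA : ∀ P : Pauli n, supportedIn A P → supportedIn A (h P))
    (hchi : ∀ Q P : Pauli n, chi (h Q) (h P) = chi Q P)
    (f : Pauli n → ℝ) (P : Pauli n) (hP : supportedIn A P) :
    ∑ Q ∈ orb h c P, muF f A Q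
      = (((orb h c P).card : ℝ) / (4 : ℝ) ^ A.card) *
          ∑ Q ∈ Finset.univ.filter (fun Q => supportedIn A Q),
            (chi Q P : ℝ) * (((orb h c Q).card : ℝ)⁻¹ * ∑ R ∈ orb h c Q, f R) := by
  classical
  set S : Finset (Pauli n) := Finset.univ.filter (fun Q => supportedIn A Q) with hS
  have hc0 : (c : ℝ) ≠ 0 := Nat.cast_ne_zero.mpr hc.ne'
  have horbmem : ∀ x : Pauli n, x ∈ orb h c x := fun x =>
    Finset.mem_image.mpr ⟨0, Finset.mem_range.mpr hc, rfl⟩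
  have horbcard : ∀ x : Pauli n, ((orb h c x).card : ℝ) ≠ 0 := fun x =>
    Nat.cast_ne_zero.mpr (Finset.card_ne_zero_of_mem (horbmem x))
  -- iterated invariance
  have hAiter : ∀ j (x : Pauli n), supportedIn A x → supportedIn A ((⇑h)^[j] x) := by
    intro j
    induction j with
    | zero => intro x hx; simpa using hx
    | succ j ih =>
      intro x hx
      rw [Function.iterate_succ_apply']
      exact hA _ (ih x hx)
  have hchiiter : ∀ j (Q R : Pauli n), chi ((⇑h)^[j] Q) ((⇑h)^[j] R) = chi Q R := by
    intro j
    induction j with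
    | zero => intro Q R; simp
    | succ j ih =>
      intro Q R
      rw [Function.iterate_succ_apply', Function.iterate_succ_apply', hchi]
      exact ih Q R
  have himage : ∀ j, S.image ((⇑h)^[j]) = S := by
    intro j
    apply Finset.eq_of_subset_of_card_le
    · intro x hx
      rw [Finset.mem_image] at hx
      obtain ⟨y, hy, rfl⟩ := hx
      rw [hS, Finset.mem_filter] at hy ⊢
      exact ⟨Finset.mem_univ _, hAiter j y hy.2⟩
    · rw [Finset.card_image_of_injective _ (Function.Injective.iterate h.injective j)]
  -- reindexing step
  have hstep : ∀ j, ∑ Q ∈ S, (chi Q ((⇑h)^[j] P) : ℝ) * f Q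
      = ∑ Q ∈ S, (chi Q P : ℝ) * f ((⇑h)^[j] Q) := by
    intro j
    conv_lhs => rw [← himage j]
    rw [Finset.sum_image (fun a _ b _ hab => Function.Injective.iterate h.injective j hab)]
    apply Finset.sum_congr rfl
    intro Q _
    rw [hchiiter j Q P]
  -- rewrite each f-orbit average via the range sum
  have havgf : ∀ Q : Pauli n, ((orb h c Q).card : ℝ)⁻¹ * ∑ R ∈ orb h c Q, f R
      = (c : ℝ)⁻¹ * ∑ j ∈ Finset.range c, f ((⇑h)^[j] Q) := fun Q =>
    mufi_avg h hc hcid Q f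
  -- main computation
  have hmain : ∑ Q ∈ orb h c P, muF f A Q
      = ((orb h c P).card : ℝ) * ((c : ℝ)⁻¹ * ∑ j ∈ Finset.range c, muF f A ((⇑h)^[j] P)) := by
    rw [← mufi_avg h hc hcid P (muF f A)]
    exact (mul_inv_cancel_left₀ (horbcard P) _).symm
  rw [hmain]
  have hsum : ∑ j ∈ Finset.range c, muF f A ((⇑h)^[j] P)
      = ((4 : ℝ) ^ A.card)⁻¹ *
          ∑ Q ∈ S, (chi Q P : ℝ) * ∑ j ∈ Finset.range c, f ((⇑h)^[j] Q) := by
    unfold muF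
    rw [← Finset.mul_sum]
    congr 1
    rw [Finset.sum_congr rfl (fun j _ => hstep j), Finset.sum_comm]
    apply Finset.sum_congr rfl
    intro Q _
    rw [Finset.mul_sum]
  rw [hsum]
  have hrhs : ∑ Q ∈ S, (chi Q P : ℝ) * (((orb h c Q).card : ℝ)⁻¹ * ∑ R ∈ orb h c Q, f R)
      = (c : ℝ)⁻¹ * ∑ Q ∈ S, (chi Q P : ℝ) * ∑ j ∈ Finset.range c, f ((⇑h)^[j] Q) := by
    rw [Finset.mul_sum]
    exact Finset.sum_congr rfl fun Q _ => by rw [havgf Q]; ring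
  rw [hrhs]
  ring
end

section
/- Let G be a finite group acting on a finite set S, let f : S → ℝ, and define the orbital arithmetic mean ā(x) = |Orb(x)|^{-1} Σ_{y ∈ Orb(x)} f(y) and geometric mean ḡ(x) = (Π_{y ∈ Orb(x)} f(y))^{1/|Orb(x)|} for f > 0. Then 0 ≤ ā(x) − ḡ(x) ≤ Var_{y ∈ Orb(x)}(f(y)) / (2·min_{y ∈ Orb(x)} f(y)), where Var denotes the variance over the uniform distribution on the orbit. -/
open Finset

/-- The orbit of `x` under a finite group action, as a finset. -/
def orbFin (G : Type*) [Group G] [Fintype G] {S : Type*} [MulAction G S]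
    [DecidableEq S] (x : S) : Finset S :=
  Finset.univ.image (fun g : G => g • x)

/-- The arithmetic mean of `f` over the orbit of `x`. -/
noncomputable def orbMean (G : Type*) [Group G] [Fintype G] {S : Type*}
    [MulAction G S] [DecidableEq S] (f : S → ℝ) (x : S) : ℝ :=
  ((orbFin G x).card : ℝ)⁻¹ * ∑ y ∈ orbFin G x, f y

/-- The geometric mean of `f` over the orbit of `x`. -/
noncomputable def orbGeoMean (G : Type*) [Group G] [Fintype G] {S : Type*}
    [MulAction G S] [DecidableEq S] (f : S → ℝ) (x : S) : ℝ :=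
  (∏ y ∈ orbFin G x, f y) ^ (((orbFin G x).card : ℝ)⁻¹)

/-- The variance of `f` over the uniform distribution on the orbit of `x`. -/
noncomputable def orbVar (G : Type*) [Group G] [Fintype G] {S : Type*}
    [MulAction G S] [DecidableEq S] (f : S → ℝ) (x : S) : ℝ :=
  ((orbFin G x).card : ℝ)⁻¹ * ∑ y ∈ orbFin G x, (f y - orbMean G f x) ^ 2

/-!
Write `a` for the mean and `m` for the minimum of `f` on the orbit, and `g` for the geometric
mean, so that `log g` is the mean of `log f`. From `1 - 1/x ≤ log x` we get
`a - g ≤ a log (a / g)`, the mean of `a log (a / f y)`. For `t, a ≥ m`,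
`a log (a / t) ≤ a - t + (t - a)² / (2m)`: as a function of `t` the difference has derivative
`(t - a)(t - m) / (m t)`, so it is smallest at `t = a`, where it vanishes. Averaging over the
orbit, the linear terms cancel and `Var / (2m)` is left. The lower bound is AM–GM.
-/

open Real

namespace Real

theorem mul_log_div_le_sub_add_sq_div {m a t : ℝ} (hm : 0 < m) (hma : m ≤ a) (hmt : m ≤ t) :
    a * log (a / t) ≤ a - t + (t - a) ^ 2 / (2 * m) := by
  have ha : 0 < a := hm.trans_le hma
  set F : ℝ → ℝ := fun t => a - t + (t - a) ^ 2 / (2 * m) + a * log t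
  set F' : ℝ → ℝ := fun s => (s - a) * (s - m) / (m * s)
  have hF : ∀ s, 0 < s → HasDerivAt F (F' s) s := fun s hs =>
    (((hasDerivAt_id' s).const_sub a).add
      ((((hasDerivAt_id' s).sub_const a).pow 2).div_const (2 * m))).add
      ((hasDerivAt_log hs.ne').const_mul a) |>.congr_deriv (by simp only [F']; field_simp; ring)
  have hFcont : ContinuousOn F (Set.Ici m) := fun s hs =>
    (hF s (hm.trans_le hs)).continuousAt.continuousWithinAt
  have hFa : F a ≤ F t := by
    rcases le_total a t with hat | hta
    · refine monotoneOn_of_hasDerivWithinAt_nonneg (f' := F') (convex_Ici a)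
        (hFcont.mono (Set.Ici_subset_Ici.2 hma)) ?_ ?_ Set.self_mem_Ici hat hat <;>
        rw [interior_Ici] <;> intro s (has : a < s)
      · exact (hF s (ha.trans has)).hasDerivWithinAt
      · exact div_nonneg (by nlinarith) (mul_pos hm (ha.trans has)).le
    · refine antitoneOn_of_hasDerivWithinAt_nonpos (f' := F') (convex_Icc m a)
        (hFcont.mono Set.Icc_subset_Ici_self) ?_ ?_ ⟨hmt, hta⟩ (Set.right_mem_Icc.2 hma) hta <;>
        rw [interior_Icc] <;> intro s ⟨hms, hsa⟩
      · exact (hF s (hm.trans hms)).hasDerivWithinAt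
      · exact div_nonpos_of_nonpos_of_nonneg (by nlinarith) (mul_pos hm (hm.trans hms)).le
  rw [log_div ha.ne' (hm.trans_le hmt).ne']
  norm_num [F] at hFa
  linarith

theorem sub_le_mul_log_div {a g : ℝ} (ha : 0 < a) (hg : 0 < g) : a - g ≤ a * log (a / g) := by
  have h := one_sub_inv_le_log_of_pos (div_pos ha hg)
  rw [inv_div] at h
  calc a - g = a * (1 - g / a) := by field_simp
    _ ≤ a * log (a / g) := mul_le_mul_of_nonneg_left h ha.le

end Real

open scoped BigOperators

namespace Finset

variable {ι : Type*} {s : Finset ι} {f : ι → ℝ}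

theorem inv_card_mul_sum_eq_expect (s : Finset ι) (f : ι → ℝ) :
    (#s : ℝ)⁻¹ * ∑ i ∈ s, f i = 𝔼 i ∈ s, f i := by
  rw [expect_eq_sum_div_card, inv_mul_eq_div]

theorem log_prod_rpow_inv_card (hf : ∀ i ∈ s, 0 < f i) :
    log ((∏ i ∈ s, f i) ^ (#s : ℝ)⁻¹) = 𝔼 i ∈ s, log (f i) := by
  rw [log_rpow (prod_pos hf), log_prod fun i hi => (hf i hi).ne', inv_card_mul_sum_eq_expect]

theorem prod_rpow_inv_card_le_expect (hs : s.Nonempty) (hf : ∀ i ∈ s, 0 ≤ f i) :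
    (∏ i ∈ s, f i) ^ (#s : ℝ)⁻¹ ≤ 𝔼 i ∈ s, f i := by
  have h := geom_mean_le_arith_mean s (fun _ => 1) f (fun _ _ => zero_le_one)
    (by simpa using hs.card_pos) hf
  simpa [expect_eq_sum_div_card] using h

theorem expect_sub_prod_rpow_inv_card_le (hs : s.Nonempty) (hf : ∀ i ∈ s, 0 < f i) :
    𝔼 i ∈ s, f i - (∏ i ∈ s, f i) ^ (#s : ℝ)⁻¹
      ≤ (𝔼 i ∈ s, (f i - 𝔼 j ∈ s, f j) ^ 2) / (2 * s.inf' hs f) := by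
  set a := 𝔼 i ∈ s, f i
  set m := s.inf' hs f
  have hm : 0 < m := (lt_inf'_iff hs).2 hf
  have hmf : ∀ i ∈ s, m ≤ f i := fun i hi => inf'_le f hi
  have hma : m ≤ a := le_expect hs hmf
  have ha : 0 < a := hm.trans_le hma
  calc a - (∏ i ∈ s, f i) ^ (#s : ℝ)⁻¹
      ≤ a * log (a / (∏ i ∈ s, f i) ^ (#s : ℝ)⁻¹) :=
        sub_le_mul_log_div ha (rpow_pos_of_pos (prod_pos hf) _)
    _ = a * 𝔼 i ∈ s, log (a / f i) := by
        rw [log_div ha.ne' (rpow_pos_of_pos (prod_pos hf) _).ne', log_prod_rpow_inv_card hf,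
          ← expect_const hs (log a), ← expect_sub_distrib]
        exact congrArg _ (expect_congr rfl fun i hi => (log_div ha.ne' (hf i hi).ne').symm)
    _ = 𝔼 i ∈ s, a * log (a / f i) := mul_expect _ _ _
    _ ≤ 𝔼 i ∈ s, (a - f i + (f i - a) ^ 2 / (2 * m)) :=
        expect_le_expect fun i hi => mul_log_div_le_sub_add_sq_div hm hma (hmf i hi)
    _ = (𝔼 i ∈ s, (f i - a) ^ 2) / (2 * m) := by
        rw [expect_add_distrib, expect_sub_distrib, expect_const hs, sub_self, zero_add,
          expect_div]

end Finset

/-- quantitative AM–GM on orbits: for `f > 0` on the orbit,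
`0 ≤ ā(x) − ḡ(x) ≤ Var(f)/(2 · min f)` over the orbit of `x`. -/
theorem orbit_am_gm_deficiency {G S : Type*} [Group G] [Fintype G]
    [MulAction G S] [DecidableEq S] (f : S → ℝ) (x : S)
    (hne : (orbFin G x).Nonempty)
    (hf : ∀ y ∈ orbFin G x, 0 < f y) :
    0 ≤ orbMean G f x - orbGeoMean G f x ∧
    orbMean G f x - orbGeoMean G f x
      ≤ orbVar G f x / (2 * (orbFin G x).inf' hne f) := by
  simp only [orbMean, orbGeoMean, orbVar, inv_card_mul_sum_eq_expect]
  exact ⟨sub_nonneg.2 (prod_rpow_inv_card_le_expect hne fun y hy => (hf y hy).le),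
    expect_sub_prod_rpow_inv_card_le hne hf⟩
end

section
/- If all easy cycles have a gate-independent error, ν(E) = Λ∘φ(E) for a fixed CPTP map Λ and all easy gates E (including the Pauli twirling gates), then the effective dressed cycle error channel E_i = ⟨φ(E_i^{-1})φ(Q^{-1})φ(H_i^{-1})ν(H_i)ν(QE_iR)φ(R^{-1})⟩_{Q,R ∈ P_n} equals φ(E_i^{-1}) [φ(H_i^{-1})ν(H_i)Λ]^{P_n} φ(E_i), the conjugate by the ideal easy gate of the Pauli twirl of the hard-cycle error; in particular it is a Pauli stochastic channel conjugated by a fixed unitary channel, and when E_i is Clifford it is itself Pauli stochastic. -/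
open Matrix Finset

/-!
Since the gate error `Λ` does not depend on the gate, the frame `φ(R)` of the dressed cycle
cancels against `φ(R⁻¹)`: the average over `R` is trivial, and the average over `Q` is the Pauli
twirl of `φ(H⁻¹) ν(H) Λ`, conjugated by `φ(E)`.

Expanding a Kraus operator in the Pauli basis, `K = ∑_P k_P P`, the twirl of `σ ↦ K σ K†` is
`∑_{P,P'} k_P k̄_{P'} (4⁻ⁿ ∑_Q χ_Q(P) χ_Q(P')) P σ P'†`, and orthogonality of the characters
`χ_Q` kills every term with `P ≠ P'`. What is left is a Pauli channel with weights `∑_k |k_P|²`,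
which sum to `2⁻ⁿ tr ∑_k K_k† K_k = 1` by Parseval. A Clifford `E` sends `P (E ρ E†) P†` to
`P' ρ P'†`, so conjugating by it turns a Pauli channel into one whose weights are pushed forward
along `P ↦ P'`.
-/

section PauliTwirl

local notation "𝕄[" n "]" => Matrix (Fin n → ZMod 2) (Fin n → ZMod 2) ℂ

def sgn (x : ZMod 2) : ℂ := (-1) ^ x.val

lemma sgn_zero : sgn 0 = 1 := by simp [sgn]

lemma sgn_one : sgn 1 = -1 := pow_one _

lemma sgn_add (x y : ZMod 2) : sgn (x + y) = sgn x * sgn y := by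
  rw [sgn, ZMod.val_add, ← neg_one_pow_eq_pow_mod_two, pow_add, sgn, sgn]

lemma sgn_mul_self (x : ZMod 2) : sgn x * sgn x = 1 := by
  rw [← sgn_add, ZModModule.add_self, sgn_zero]

lemma star_sgn (x : ZMod 2) : star (sgn x) = sgn x := by simp [sgn]

variable {n : ℕ}

lemma sum_sgn_dotProduct (b : Fin n → ZMod 2) :
    ∑ t, sgn (t ⬝ᵥ b) = if b = 0 then 2 ^ n else 0 := by
  split_ifs with hb
  · simp [hb, sgn_zero]
  · obtain ⟨i, hi⟩ := Function.ne_iff.mp hb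
    have hbi : b i = 1 := (by decide : ∀ x : ZMod 2, x ≠ 0 → x = 1) _ hi
    have hflip : ∀ t, sgn ((t + Pi.single i 1) ⬝ᵥ b) = -sgn (t ⬝ᵥ b) := fun t => by
      rw [add_dotProduct, single_dotProduct, one_mul, hbi, sgn_add, sgn_one, mul_neg_one]
    have hS := Equiv.sum_comp (Equiv.addRight (Pi.single i 1 : Fin n → ZMod 2))
      (fun t => sgn (t ⬝ᵥ b))
    simp only [Equiv.coe_addRight, hflip, Finset.sum_neg_distrib] at hS
    exact CharZero.neg_eq_self_iff.mp hS

lemma symp_eq_dotProduct (Q P : Pauli n) : symp Q P = Q.1 ⬝ᵥ P.2 + Q.2 ⬝ᵥ P.1 :=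
  Finset.sum_add_distrib

lemma symp_add_right (Q P P' : Pauli n) : symp Q (P + P') = symp Q P + symp Q P' := by
  simp only [symp_eq_dotProduct, Prod.fst_add, Prod.snd_add, dotProduct_add]
  abel

lemma sum_sgn_symp (R : Pauli n) :
    ∑ Q : Pauli n, sgn (symp Q R) = if R = 0 then 4 ^ n else 0 := by
  simp only [symp_eq_dotProduct, sgn_add, Fintype.sum_prod_type, ← Finset.sum_mul_sum,
    sum_sgn_dotProduct]
  rcases R with ⟨a, b⟩
  by_cases ha : a = 0 <;> by_cases hb : b = 0 <;> simp [ha, hb, ← mul_pow]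
  norm_num

lemma sum_sgn_symp_mul_sgn_symp (P P' : Pauli n) :
    ∑ Q : Pauli n, sgn (symp Q P) * sgn (symp Q P') = if P = P' then 4 ^ n else 0 := by
  simp_rw [← sgn_add, ← symp_add_right, sum_sgn_symp, ← ZModModule.sub_eq_add, sub_eq_zero]

lemma PauliOp_apply (P : Pauli n) (s t : Fin n → ZMod 2) :
    PauliOp P s t = if s = t + P.1 then sgn (P.2 ⬝ᵥ t) else 0 := rfl

lemma PauliOp_zero : PauliOp (0 : Pauli n) = 1 := by
  ext s t
  simp [PauliOp_apply, one_apply, sgn_zero]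

lemma PauliOp_mul (P Q : Pauli n) :
    PauliOp P * PauliOp Q = sgn (P.2 ⬝ᵥ Q.1) • PauliOp (P + Q) := by
  ext s t
  simp only [mul_apply, PauliOp_apply, Matrix.smul_apply, smul_eq_mul, mul_ite, ite_mul, zero_mul,
    mul_zero, Finset.sum_ite_eq', Finset.mem_univ, if_true]
  rw [Prod.fst_add, Prod.snd_add, add_comm P.1, ← add_assoc, dotProduct_add, add_dotProduct,
    sgn_add, sgn_add]
  congr 1
  ring

lemma conjTranspose_PauliOp (P : Pauli n) :
    (PauliOp P)ᴴ = sgn (P.2 ⬝ᵥ P.1) • PauliOp P := by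
  ext s t
  have hst : t = s + P.1 ↔ s = t + P.1 := by
    constructor <;> rintro rfl <;> rw [add_assoc, ZModModule.add_self, add_zero]
  simp only [conjTranspose_apply, PauliOp_apply, Matrix.smul_apply, smul_eq_mul, hst]
  split_ifs with h
  · rw [h, dotProduct_add, sgn_add, star_mul', star_sgn, star_sgn, mul_comm]
  · rw [star_zero, mul_zero]

lemma conjTranspose_PauliOp_mul_self (P : Pauli n) : (PauliOp P)ᴴ * PauliOp P = 1 := by
  rw [conjTranspose_PauliOp, smul_mul_assoc, PauliOp_mul, smul_smul, sgn_mul_self, one_smul,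
    ZModModule.add_self, PauliOp_zero]

lemma PauliOp_mul_conjTranspose_self (P : Pauli n) : PauliOp P * (PauliOp P)ᴴ = 1 := by
  rw [conjTranspose_PauliOp, mul_smul_comm, PauliOp_mul, smul_smul, sgn_mul_self, one_smul,
    ZModModule.add_self, PauliOp_zero]

lemma conjTranspose_PauliOp_mul_mul (Q P : Pauli n) :
    (PauliOp Q)ᴴ * PauliOp P * PauliOp Q = sgn (symp Q P) • PauliOp P := by
  rw [conjTranspose_PauliOp, smul_mul_assoc, smul_mul_assoc, PauliOp_mul, smul_mul_assoc,
    PauliOp_mul, smul_smul, smul_smul, add_comm Q P, add_assoc, ZModModule.add_self, add_zero]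
  congr 1
  simp only [symp_eq_dotProduct, Prod.snd_add, add_dotProduct, sgn_add]
  rw [dotProduct_comm Q.1 P.2]
  linear_combination (sgn (P.2 ⬝ᵥ Q.1) * sgn (Q.2 ⬝ᵥ P.1)) * sgn_mul_self (Q.2 ⬝ᵥ Q.1)

lemma trace_conjTranspose_PauliOp_mul (P : Pauli n) (A : 𝕄[n]) :
    ((PauliOp P)ᴴ * A).trace = ∑ t, sgn (P.2 ⬝ᵥ t) * A (t + P.1) t := by
  simp only [trace, Matrix.diag, mul_apply, conjTranspose_apply, PauliOp_apply, apply_ite star,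
    star_zero, star_sgn, ite_mul, zero_mul, Finset.sum_ite_eq', Finset.mem_univ, if_true]

noncomputable def pauliCoeff (P : Pauli n) (A : 𝕄[n]) : ℂ :=
  (2 ^ n)⁻¹ * ((PauliOp P)ᴴ * A).trace

lemma sum_pauliCoeff_mul_sgn (A : 𝕄[n]) (a t : Fin n → ZMod 2) :
    ∑ b, pauliCoeff (a, b) A * sgn (b ⬝ᵥ t) = A (t + a) t := by
  calc ∑ b, pauliCoeff (a, b) A * sgn (b ⬝ᵥ t)
      = (2 ^ n)⁻¹ * ∑ u, A (u + a) u * ∑ b, sgn (b ⬝ᵥ (u + t)) := by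
        simp only [pauliCoeff, trace_conjTranspose_PauliOp_mul, dotProduct_add, sgn_add,
          Finset.mul_sum, Finset.sum_mul]
        rw [Finset.sum_comm]
        refine Finset.sum_congr rfl fun u _ => Finset.sum_congr rfl fun b _ => ?_
        ring
    _ = A (t + a) t := by
        simp only [sum_sgn_dotProduct, ← ZModModule.sub_eq_add, sub_eq_zero, mul_ite, mul_zero,
          Finset.sum_ite_eq', Finset.mem_univ, if_true]
        field_simp

lemma sum_pauliCoeff_smul_PauliOp (A : 𝕄[n]) : ∑ P, pauliCoeff P A • PauliOp P = A := by
  ext s t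
  have hs : ∀ a, s = t + a ↔ a = s + t := fun a => by
    rw [← ZModModule.sub_eq_add s t, eq_sub_iff_add_eq, add_comm, eq_comm]
  simp only [Matrix.sum_apply, Matrix.smul_apply, smul_eq_mul, PauliOp_apply,
    Fintype.sum_prod_type, hs, mul_ite, mul_zero]
  rw [Finset.sum_comm]
  simp only [Finset.sum_ite_eq', Finset.mem_univ, if_true, sum_pauliCoeff_mul_sgn]
  rw [add_comm s t, ← add_assoc, ZModModule.add_self, zero_add]

lemma conjTranspose_PauliOp_mul_mul_eq_sum (Q : Pauli n) (B : 𝕄[n]) :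
    (PauliOp Q)ᴴ * B * PauliOp Q = ∑ P, (sgn (symp Q P) * pauliCoeff P B) • PauliOp P := by
  conv_lhs => rw [← sum_pauliCoeff_smul_PauliOp B]
  simp only [Finset.mul_sum, Finset.sum_mul, mul_smul_comm, smul_mul_assoc,
    conjTranspose_PauliOp_mul_mul, smul_smul, mul_comm (pauliCoeff _ B)]

lemma sum_smul_mul_mul_conjTranspose_sum_smul {ι m α : Type*} [Fintype ι] [Fintype m]
    [CommSemiring α] [StarRing α] (a : ι → α) (X : ι → Matrix m m α) (σ : Matrix m m α) :
    (∑ i, a i • X i) * σ * (∑ i, a i • X i)ᴴ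
      = ∑ i, ∑ j, (a i * star (a j)) • (X i * σ * (X j)ᴴ) := by
  simp only [conjTranspose_sum, conjTranspose_smul, Finset.sum_mul, Finset.mul_sum,
    smul_mul_assoc, mul_smul_comm, Finset.smul_sum, smul_smul]
  rw [Finset.sum_comm]
  simp only [mul_comm (star _)]

lemma sum_pauli_twirl_conj (B σ : 𝕄[n]) :
    ∑ Q, (PauliOp Q)ᴴ * (B * (PauliOp Q * σ * (PauliOp Q)ᴴ) * Bᴴ) * PauliOp Q
      = (4 ^ n : ℂ) •
          ∑ P, (Complex.normSq (pauliCoeff P B) : ℂ) • (PauliOp P * σ * (PauliOp P)ᴴ) := by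
  have hcoef : ∀ P P' : Pauli n,
      ∑ Q : Pauli n, sgn (symp Q P) * pauliCoeff P B * star (sgn (symp Q P') * pauliCoeff P' B)
        = if P = P' then (4 : ℂ) ^ n * (Complex.normSq (pauliCoeff P B) : ℂ) else 0 := by
    intro P P'
    simp only [star_mul', star_sgn]
    calc _ = pauliCoeff P B * star (pauliCoeff P' B) *
          ∑ Q : Pauli n, sgn (symp Q P) * sgn (symp Q P') := by
          rw [Finset.mul_sum]; exact Finset.sum_congr rfl fun Q _ => by ring
      _ = _ := by
          rw [sum_sgn_symp_mul_sgn_symp]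
          split_ifs with h
          · rw [h, Complex.star_def, Complex.mul_conj, mul_comm]
          · rw [mul_zero]
  calc _ = ∑ Q : Pauli n, ((PauliOp Q)ᴴ * B * PauliOp Q) * σ * ((PauliOp Q)ᴴ * B * PauliOp Q)ᴴ :=
        Finset.sum_congr rfl fun Q _ => by
          simp only [conjTranspose_mul, conjTranspose_conjTranspose, Matrix.mul_assoc]
    _ = ∑ P, ∑ P', (∑ Q : Pauli n, sgn (symp Q P) * pauliCoeff P B *
          star (sgn (symp Q P') * pauliCoeff P' B)) • (PauliOp P * σ * (PauliOp P')ᴴ) := by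
        simp only [conjTranspose_PauliOp_mul_mul_eq_sum, sum_smul_mul_mul_conjTranspose_sum_smul,
          Finset.sum_smul]
        rw [Finset.sum_comm]
        exact Finset.sum_congr rfl fun P _ => Finset.sum_comm
    _ = _ := by
        simp only [hcoef, ite_smul, zero_smul, Finset.sum_ite_eq, Finset.mem_univ, if_true,
          Finset.smul_sum, smul_smul]

lemma card_pauli : Fintype.card (Pauli n) = 4 ^ n := by
  simp [Fintype.card_prod, ZMod.card, ← mul_pow]

noncomputable def pauliTwirl (Φ : 𝕄[n] → 𝕄[n]) (σ : 𝕄[n]) : 𝕄[n] :=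
  ((4 : ℂ) ^ n)⁻¹ • ∑ P : Pauli n, (PauliOp P)ᴴ * Φ (PauliOp P * σ * (PauliOp P)ᴴ) * PauliOp P

noncomputable def pauliChannel (q : Pauli n → ℝ) (σ : 𝕄[n]) : 𝕄[n] :=
  ∑ P, (q P : ℂ) • (PauliOp P * σ * (PauliOp P)ᴴ)

section Kraus

variable {ι : Type*} [Fintype ι] (K : ι → 𝕄[n])

noncomputable def krausPauliWeight (P : Pauli n) : ℝ :=
  ∑ k, Complex.normSq (pauliCoeff P (K k))

lemma krausPauliWeight_nonneg (P : Pauli n) : 0 ≤ krausPauliWeight K P :=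
  Finset.sum_nonneg fun _ _ => Complex.normSq_nonneg _

lemma pauliTwirl_eq_pauliChannel {Φ : 𝕄[n] → 𝕄[n]} (hΦ : ∀ σ, Φ σ = ∑ k, K k * σ * (K k)ᴴ)
    (σ : 𝕄[n]) : pauliTwirl Φ σ = pauliChannel (krausPauliWeight K) σ := by
  simp only [pauliTwirl, pauliChannel, krausPauliWeight, hΦ, Finset.mul_sum, Finset.sum_mul]
  rw [Finset.sum_comm]
  simp only [sum_pauli_twirl_conj, ← Finset.smul_sum, smul_smul]
  rw [inv_mul_cancel₀ (pow_ne_zero _ (by norm_num : (4 : ℂ) ≠ 0)), one_smul, Finset.sum_comm]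
  push_cast
  simp only [Finset.sum_smul]

lemma sum_normSq_pauliCoeff (B : 𝕄[n]) :
    ∑ P, (Complex.normSq (pauliCoeff P B) : ℂ) = (2 ^ n)⁻¹ * (Bᴴ * B).trace := by
  have h := congrArg trace (sum_pauli_twirl_conj B 1)
  have hconj : ∀ Q : Pauli n, ((PauliOp Q)ᴴ * (B * (PauliOp Q * 1 * (PauliOp Q)ᴴ) * Bᴴ) *
      PauliOp Q).trace = (Bᴴ * B).trace := fun Q => by
    rw [Matrix.mul_one, PauliOp_mul_conjTranspose_self, Matrix.mul_one, trace_mul_cycle,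
      PauliOp_mul_conjTranspose_self, Matrix.one_mul, trace_mul_comm]
  rw [trace_sum, Finset.sum_congr rfl fun Q _ => hconj Q] at h
  simp only [trace_sum, trace_smul, Finset.sum_const, Finset.card_univ, card_pauli,
    Matrix.mul_one, PauliOp_mul_conjTranspose_self, trace_one, Fintype.card_fun, ZMod.card,
    Fintype.card_fin, smul_eq_mul, nsmul_eq_mul, ← Finset.sum_mul] at h
  push_cast at h
  rw [eq_inv_mul_iff_mul_eq₀ (pow_ne_zero _ two_ne_zero), mul_comm]
  exact (mul_left_cancel₀ (pow_ne_zero _ (by norm_num)) h).symm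

lemma sum_krausPauliWeight (hK : ∑ k, (K k)ᴴ * K k = 1) : ∑ P, krausPauliWeight K P = 1 := by
  have h : (∑ P, krausPauliWeight K P : ℂ) = 1 := by
    push_cast [krausPauliWeight]
    rw [Finset.sum_comm]
    simp only [sum_normSq_pauliCoeff, ← Finset.mul_sum, ← trace_sum, hK, trace_one,
      Fintype.card_fun, ZMod.card, Fintype.card_fin]
    push_cast
    exact inv_mul_cancel₀ (pow_ne_zero _ two_ne_zero)
  exact_mod_cast h

end Kraus

lemma dressed_average_eq_conj_pauliTwirl (Φ : 𝕄[n] → 𝕄[n]) (E ρ : 𝕄[n]) :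
    ((16 : ℂ) ^ n)⁻¹ • ∑ Q : Pauli n, ∑ R : Pauli n,
        Eᴴ * ((PauliOp Q)ᴴ * Φ ((PauliOp Q * E * PauliOp R) * ((PauliOp R)ᴴ * ρ * PauliOp R) *
          (PauliOp Q * E * PauliOp R)ᴴ) * PauliOp Q) * E
      = Eᴴ * pauliTwirl Φ (E * ρ * Eᴴ) * E := by
  have hcancel : ∀ (R : Pauli n) (X : 𝕄[n]), PauliOp R * ((PauliOp R)ᴴ * X) = X := fun R X => by
    rw [← Matrix.mul_assoc, PauliOp_mul_conjTranspose_self, Matrix.one_mul]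
  have hframe : ∀ Q R : Pauli n,
      (PauliOp Q * E * PauliOp R) * ((PauliOp R)ᴴ * ρ * PauliOp R) * (PauliOp Q * E * PauliOp R)ᴴ
        = PauliOp Q * (E * ρ * Eᴴ) * (PauliOp Q)ᴴ := fun Q R => by
    simp only [conjTranspose_mul, Matrix.mul_assoc, hcancel]
  simp only [hframe, Finset.sum_const, Finset.card_univ, card_pauli, pauliTwirl, Matrix.mul_smul,
    Matrix.smul_mul, Finset.mul_sum, Finset.sum_mul, ← Finset.smul_sum, ← Nat.cast_smul_eq_nsmul ℂ,
    smul_smul]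
  congr 1
  push_cast
  rw [show (16 : ℂ) = 4 * 4 by norm_num, mul_pow, mul_inv, mul_assoc,
    inv_mul_cancel₀ (pow_ne_zero _ (by norm_num)), mul_one]

section Clifford

variable {E : 𝕄[n]}

lemma star_mul_self_eq_one_of_conj_PauliOp (hE : Eᴴ * E = 1 ∧ E * Eᴴ = 1) {P P' : Pauli n}
    {c : ℂ} (h : Eᴴ * PauliOp P * E = c • PauliOp P') : star c * c = 1 := by
  have hunit : (Eᴴ * PauliOp P * E)ᴴ * (Eᴴ * PauliOp P * E) = 1 := by
    simp only [conjTranspose_mul, conjTranspose_conjTranspose, Matrix.mul_assoc]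
    rw [← Matrix.mul_assoc E, hE.2, Matrix.one_mul, ← Matrix.mul_assoc (PauliOp P)ᴴ,
      conjTranspose_PauliOp_mul_self, Matrix.one_mul, hE.1]
  rw [h, conjTranspose_smul, smul_mul_assoc, mul_smul_comm, smul_smul,
    conjTranspose_PauliOp_mul_self] at hunit
  simpa using congrFun (congrFun hunit 0) 0

lemma conj_PauliOp_conj_eq (hE : Eᴴ * E = 1 ∧ E * Eᴴ = 1) {P P' : Pauli n} {c : ℂ}
    (h : Eᴴ * PauliOp P * E = c • PauliOp P') (ρ : 𝕄[n]) :
    Eᴴ * (PauliOp P * (E * ρ * Eᴴ) * (PauliOp P)ᴴ) * E = PauliOp P' * ρ * (PauliOp P')ᴴ := by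
  calc _ = (Eᴴ * PauliOp P * E) * ρ * (Eᴴ * PauliOp P * E)ᴴ := by
        simp only [conjTranspose_mul, conjTranspose_conjTranspose, Matrix.mul_assoc]
    _ = _ := by
        rw [h, conjTranspose_smul, smul_mul_assoc, mul_smul_comm, smul_mul_assoc, smul_smul,
          star_mul_self_eq_one_of_conj_PauliOp hE h, one_smul]

lemma conj_pauliChannel_of_clifford (hE : Eᴴ * E = 1 ∧ E * Eᴴ = 1) {f : Pauli n → Pauli n}
    {c : Pauli n → ℂ}
    (hf : ∀ P, Eᴴ * PauliOp P * E = c P • PauliOp (f P)) (q : Pauli n → ℝ) (ρ : 𝕄[n]) :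
    Eᴴ * pauliChannel q (E * ρ * Eᴴ) * E
      = pauliChannel (fun P' => ∑ P ∈ Finset.univ.filter (f · = P'), q P) ρ := by
  have hterm := fun P => conj_PauliOp_conj_eq hE (hf P) ρ
  simp only [pauliChannel, Finset.mul_sum, Finset.sum_mul, mul_smul_comm, smul_mul_assoc, hterm,
    Complex.ofReal_sum, Finset.sum_smul]
  rw [← Finset.sum_fiberwise Finset.univ f]
  refine Finset.sum_congr rfl fun P' _ => Finset.sum_congr rfl fun P hP => ?_
  rw [(Finset.mem_filter.mp hP).2]

end Clifford

end PauliTwirl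

theorem effective_error_gate_independent_general {n m : ℕ}
    (E H : Matrix (Fin n → ZMod 2) (Fin n → ZMod 2) ℂ)
    (nuH Lam : Matrix (Fin n → ZMod 2) (Fin n → ZMod 2) ℂ →
      Matrix (Fin n → ZMod 2) (Fin n → ZMod 2) ℂ)
    (hE : Eᴴ * E = 1 ∧ E * Eᴴ = 1)
    (K : Fin m → Matrix (Fin n → ZMod 2) (Fin n → ZMod 2) ℂ)
    (hK : ∑ k, (K k)ᴴ * K k = 1)
    (hKraus : ∀ ρ, Hᴴ * nuH (Lam ρ) * H = ∑ k, K k * ρ * (K k)ᴴ) :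
    -- the effective error channel equals φ(E⁻¹) ∘ [φ(H⁻¹) ν(H) Λ]^{P_n} ∘ φ(E):
    (∀ ρ : Matrix (Fin n → ZMod 2) (Fin n → ZMod 2) ℂ,
      ((16 : ℂ) ^ n)⁻¹ • ∑ Q : Pauli n, ∑ R : Pauli n,
          Eᴴ * ((PauliOp Q)ᴴ * (Hᴴ *
            nuH (Lam ((PauliOp Q * E * PauliOp R) *
              ((PauliOp R)ᴴ * ρ * PauliOp R) * (PauliOp Q * E * PauliOp R)ᴴ))
            * H) * PauliOp Q) * E
        = Eᴴ * (((4 : ℂ) ^ n)⁻¹ • ∑ P : Pauli n,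
            (PauliOp P)ᴴ * (Hᴴ *
              nuH (Lam (PauliOp P * (E * ρ * Eᴴ) * (PauliOp P)ᴴ)) * H) * PauliOp P) * E) ∧
    -- it is a Pauli stochastic channel conjugated by the unitary channel φ(E):
    (∃ q : Pauli n → ℝ, (∀ P, 0 ≤ q P) ∧ (∑ P, q P = 1) ∧
      ∀ ρ : Matrix (Fin n → ZMod 2) (Fin n → ZMod 2) ℂ,
        ((16 : ℂ) ^ n)⁻¹ • ∑ Q : Pauli n, ∑ R : Pauli n,
            Eᴴ * ((PauliOp Q)ᴴ * (Hᴴ *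
              nuH (Lam ((PauliOp Q * E * PauliOp R) *
                ((PauliOp R)ᴴ * ρ * PauliOp R) * (PauliOp Q * E * PauliOp R)ᴴ))
              * H) * PauliOp Q) * E
          = Eᴴ * (∑ P : Pauli n,
              (q P : ℂ) • (PauliOp P * (E * ρ * Eᴴ) * (PauliOp P)ᴴ)) * E) ∧
    -- and if E is Clifford, it is itself a Pauli stochastic channel:
    ((∀ P : Pauli n, ∃ (P' : Pauli n) (c : ℂ), Eᴴ * PauliOp P * E = c • PauliOp P') →
      ∃ q' : Pauli n → ℝ, (∀ P, 0 ≤ q' P) ∧ (∑ P, q' P = 1) ∧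
        ∀ ρ : Matrix (Fin n → ZMod 2) (Fin n → ZMod 2) ℂ,
          ((16 : ℂ) ^ n)⁻¹ • ∑ Q : Pauli n, ∑ R : Pauli n,
              Eᴴ * ((PauliOp Q)ᴴ * (Hᴴ *
                nuH (Lam ((PauliOp Q * E * PauliOp R) *
                  ((PauliOp R)ᴴ * ρ * PauliOp R) * (PauliOp Q * E * PauliOp R)ᴴ))
                * H) * PauliOp Q) * E
            = ∑ P : Pauli n, (q' P : ℂ) • (PauliOp P * ρ * (PauliOp P)ᴴ)) := by
  have hdressed := dressed_average_eq_conj_pauliTwirl (fun X => Hᴴ * nuH (Lam X) * H) E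
  have htwirl := pauliTwirl_eq_pauliChannel K hKraus
  refine ⟨hdressed, ⟨krausPauliWeight K, krausPauliWeight_nonneg K, sum_krausPauliWeight K hK,
    fun ρ => (hdressed ρ).trans (by rw [htwirl]; rfl)⟩, fun hClifford => ?_⟩
  choose f c hf using hClifford
  refine ⟨fun P' => ∑ P ∈ Finset.univ.filter (f · = P'), krausPauliWeight K P,
    fun _ => Finset.sum_nonneg fun P _ => krausPauliWeight_nonneg K P,
    by rw [Finset.sum_fiberwise]; exact sum_krausPauliWeight K hK,
    fun ρ => (hdressed ρ).trans ?_⟩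
  rw [htwirl, conj_pauliChannel_of_clifford hE hf]
  rfl

/-- if all easy cycles have the same (gate-independent) error
`ν(E) = Λ ∘ φ(E)`, then the effective dressed-cycle error channel
`E_i = ⟨φ(E⁻¹) φ(Q⁻¹) φ(H⁻¹) ν(H) ν(QER) φ(R⁻¹)⟩_{Q,R}` equals
`φ(E⁻¹) [φ(H⁻¹) ν(H) Λ]^{P_n} φ(E)`, the conjugate by the ideal easy gate of the
Pauli twirl of the hard-cycle error.  In particular, when the combined hard-cycle
error `φ(H⁻¹) ∘ ν(H) ∘ Λ` is CPTP (Kraus operators `K`), `E_i` is a Pauli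
stochastic channel conjugated by the fixed unitary channel `φ(E)`; and if `E` is
Clifford (normalizes the Pauli group up to phase), `E_i` is itself Pauli
stochastic. -/
theorem effective_error_gate_independent {n m : ℕ}
    (E H : Matrix (Fin n → ZMod 2) (Fin n → ZMod 2) ℂ)
    (nuH Lam : Matrix (Fin n → ZMod 2) (Fin n → ZMod 2) ℂ →
      Matrix (Fin n → ZMod 2) (Fin n → ZMod 2) ℂ)
    (hE : Eᴴ * E = 1 ∧ E * Eᴴ = 1) (hH : Hᴴ * H = 1 ∧ H * Hᴴ = 1)
    (K : Fin m → Matrix (Fin n → ZMod 2) (Fin n → ZMod 2) ℂ)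
    (hK : ∑ k, (K k)ᴴ * K k = 1)
    (hKraus : ∀ ρ, Hᴴ * nuH (Lam ρ) * H = ∑ k, K k * ρ * (K k)ᴴ) :
    -- the effective error channel equals φ(E⁻¹) ∘ [φ(H⁻¹) ν(H) Λ]^{P_n} ∘ φ(E):
    (∀ ρ : Matrix (Fin n → ZMod 2) (Fin n → ZMod 2) ℂ,
      ((16 : ℂ) ^ n)⁻¹ • ∑ Q : Pauli n, ∑ R : Pauli n,
          Eᴴ * ((PauliOp Q)ᴴ * (Hᴴ *
            nuH (Lam ((PauliOp Q * E * PauliOp R) *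
              ((PauliOp R)ᴴ * ρ * PauliOp R) * (PauliOp Q * E * PauliOp R)ᴴ))
            * H) * PauliOp Q) * E
        = Eᴴ * (((4 : ℂ) ^ n)⁻¹ • ∑ P : Pauli n,
            (PauliOp P)ᴴ * (Hᴴ *
              nuH (Lam (PauliOp P * (E * ρ * Eᴴ) * (PauliOp P)ᴴ)) * H) * PauliOp P) * E) ∧
    -- it is a Pauli stochastic channel conjugated by the unitary channel φ(E):
    (∃ q : Pauli n → ℝ, (∀ P, 0 ≤ q P) ∧ (∑ P, q P = 1) ∧
      ∀ ρ : Matrix (Fin n → ZMod 2) (Fin n → ZMod 2) ℂ,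
        ((16 : ℂ) ^ n)⁻¹ • ∑ Q : Pauli n, ∑ R : Pauli n,
            Eᴴ * ((PauliOp Q)ᴴ * (Hᴴ *
              nuH (Lam ((PauliOp Q * E * PauliOp R) *
                ((PauliOp R)ᴴ * ρ * PauliOp R) * (PauliOp Q * E * PauliOp R)ᴴ))
              * H) * PauliOp Q) * E
          = Eᴴ * (∑ P : Pauli n,
              (q P : ℂ) • (PauliOp P * (E * ρ * Eᴴ) * (PauliOp P)ᴴ)) * E) ∧
    -- and if E is Clifford, it is itself a Pauli stochastic channel:
    ((∀ P : Pauli n, ∃ (P' : Pauli n) (c : ℂ), Eᴴ * PauliOp P * E = c • PauliOp P') →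
      ∃ q' : Pauli n → ℝ, (∀ P, 0 ≤ q' P) ∧ (∑ P, q' P = 1) ∧
        ∀ ρ : Matrix (Fin n → ZMod 2) (Fin n → ZMod 2) ℂ,
          ((16 : ℂ) ^ n)⁻¹ • ∑ Q : Pauli n, ∑ R : Pauli n,
              Eᴴ * ((PauliOp Q)ᴴ * (Hᴴ *
                nuH (Lam ((PauliOp Q * E * PauliOp R) *
                  ((PauliOp R)ᴴ * ρ * PauliOp R) * (PauliOp Q * E * PauliOp R)ᴴ))
                * H) * PauliOp Q) * E
            = ∑ P : Pauli n, (q' P : ℂ) • (PauliOp P * ρ * (PauliOp P)ᴴ)) :=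
  effective_error_gate_independent_general E H nuH Lam hE K hK hKraus
end
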